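/- For every tree T = T₁ ∨ T₂, the cardinality of S_T satisfies |S_T| = C(|T|−1, |T₁|) · |S_{T₁}| · |S_{T₂}|, where C(a,b) denotes the binomial coefficient (with the conventions |S_|| = 1 and |S_•| = 1 for the one-vertex tree •). -/

import Mathlib

/-!
Write `σ = σ₁ · 1 · σ₂` by splitting at the entry `1`, so that `φ(σ) = φ(σ₁) ∨ φ(σ₂)`.
Then `σ` is determined by the set `A ⊆ {2, …, n}` of values of `σ₁`, which has `|T₁|` elements,
together with `σ₁` and `σ₂` viewed as arrangements of `A` and of its complement.
Since `φ` only sees the relative order of the entries, the arrangements of any `k`-element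
set of integers with tree `T` are as many as the elements of `S_T`.
-/

/-- The minimum of `a :: l` (computed by folding `min`) is a member of `a :: l`. -/
lemma foldr_min_mem (a : ℤ) : ∀ l : List ℤ, l.foldr min a ∈ a :: l := by
  intro l
  induction l with
  | nil => simp
  | cons b l ih =>
    simp only [List.foldr_cons]
    rcases min_choice b (l.foldr min a) with h | h
    · rw [h]; simp
    · rw [h]
      rcases List.mem_cons.mp ih with h' | h'
      · simp [h']
      · simp [h']

/-- The planar binary tree `φ(I)` associated to a list `I` of (distinct) integers:
`φ` of the empty list is the empty tree `|`, and `φ(I) = φ(I₁) ∨ φ(I₂)` where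
`I = I₁ · (min I) · I₂` is the splitting of `I` at its minimal entry. -/
def phi : List ℤ → Tree Unit
  | [] => Tree.nil
  | a :: l =>
    Tree.node ()
      (phi ((a :: l).take ((a :: l).idxOf (l.foldr min a))))
      (phi ((a :: l).drop ((a :: l).idxOf (l.foldr min a) + 1)))
termination_by l => l.length
decreasing_by
  · have hm := foldr_min_mem a l
    have hk := List.idxOf_lt_length_iff.mpr hm
    simp only [List.length_take, List.length_cons, List.foldr_attach (f := min)] at *
    omega
  · simp only [List.length_drop, List.length_cons]
    omega

/-- The standardization of a list `I` of distinct integers: the list whose `j`-th entry is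
the (1-indexed) position of `I_j` in the increasing ordering of the entries of `I`. -/
def stdz (I : List ℤ) : List ℤ :=
  I.map (fun x => ((I.filter (fun y => y < x)).length : ℤ) + 1)

/-- `l` is (the list of values of) a permutation of `{1, …, n}`. -/
def IsPermList (n : ℕ) (l : List ℤ) : Prop :=
  l.Perm ((List.range n).map (fun k => (k : ℤ) + 1))

/-- `S_T`: the set of permutations `σ ∈ S_{|T|}` (identified with their lists of values
`(σ(1),…,σ(n))`) such that `φ(σ) = T`. -/
def STree (T : Tree Unit) : Set (List ℤ) :=
  {l | IsPermList T.numNodes l ∧ phi l = T}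

lemma foldr_min_le (a : ℤ) (t : List ℤ) : ∀ x ∈ a :: t, t.foldr min a ≤ x := by
  induction t with
  | nil => simp
  | cons b t ih => simp_all

lemma phi_nil : phi [] = Tree.nil := by rw [phi]

lemma phi_append_cons {l₁ l₂ : List ℤ} {m : ℤ} (hm : ∀ x ∈ l₁ ++ l₂, m < x) :
    phi (l₁ ++ m :: l₂) = Tree.node () (phi l₁) (phi l₂) := by
  obtain ⟨a, t, ht⟩ : ∃ a t, l₁ ++ m :: l₂ = a :: t := by cases l₁ <;> exact ⟨_, _, rfl⟩
  have hle : ∀ x ∈ a :: t, m ≤ x := by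
    intro x hx
    rw [← ht, List.mem_append, List.mem_cons] at hx
    rcases hx with hx | rfl | hx
    exacts [(hm x (by simp [hx])).le, le_rfl, (hm x (by simp [hx])).le]
  have hmin : t.foldr min a = m :=
    le_antisymm (foldr_min_le a t m (by simp [← ht])) (hle _ (foldr_min_mem a t))
  have hm₁ : m ∉ l₁ := fun h => (hm m (List.mem_append_left _ h)).false
  rw [ht, phi, hmin, ← ht, List.idxOf_append_of_notMem hm₁, List.idxOf_cons_self, add_zero,
    List.take_left' rfl]
  simp

lemma List.Nodup.exists_eq_append_cons_min {l : List ℤ} (hl : l.Nodup) (hne : l ≠ []) :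
    ∃ l₁ m l₂, l = l₁ ++ m :: l₂ ∧ ∀ x ∈ l₁ ++ l₂, m < x := by
  obtain ⟨m, hm, hmin⟩ : ∃ m ∈ l, ∀ x ∈ l, m ≤ x :=
    ⟨l.toFinset.min' (List.toFinset_nonempty_iff _ |>.mpr hne),
      List.mem_toFinset.mp (Finset.min'_mem _ _),
      fun x hx => Finset.min'_le _ _ (List.mem_toFinset.mpr hx)⟩
  obtain ⟨l₁, l₂, rfl⟩ := List.append_of_mem hm
  rw [List.nodup_middle, List.nodup_cons] at hl
  refine ⟨l₁, m, l₂, rfl, fun x hx => (hmin x ?_).lt_of_ne ?_⟩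
  · simp only [List.mem_append, List.mem_cons] at hx ⊢
    tauto
  · rintro rfl
    exact hl.1 hx

@[elab_as_elim]
theorem List.Nodup.induction_on_min {P : List ℤ → Prop} {l : List ℤ} (hl : l.Nodup) (nil : P [])
    (append_cons : ∀ l₁ m l₂, (∀ x ∈ l₁ ++ l₂, m < x) → (l₁ ++ m :: l₂).Nodup →
      P l₁ → P l₂ → P (l₁ ++ m :: l₂)) : P l := by
  induction hn : l.length using Nat.strong_induction_on generalizing l with
  | _ n ih =>
    rcases eq_or_ne l [] with rfl | hne
    · exact nil
    obtain ⟨l₁, m, l₂, rfl, hm⟩ := hl.exists_eq_append_cons_min hne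
    simp only [List.length_append, List.length_cons] at hn
    exact append_cons l₁ m l₂ hm hl (ih _ (by omega) hl.of_append_left rfl)
      (ih _ (by omega) hl.of_append_right.of_cons rfl)

lemma numNodes_phi {l : List ℤ} (hl : l.Nodup) : (phi l).numNodes = l.length := by
  refine hl.induction_on_min (by rw [phi_nil]; rfl) fun l₁ m l₂ hm _ ih₁ ih₂ => ?_
  rw [phi_append_cons hm]
  simp [Tree.numNodes, ih₁, ih₂, add_assoc]

lemma phi_map_of_strictMonoOn {f : ℤ → ℤ} {l : List ℤ} (hl : l.Nodup)
    (hf : StrictMonoOn f {x | x ∈ l}) : phi (l.map f) = phi l := by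
  revert hf
  refine hl.induction_on_min (fun _ => rfl) fun l₁ m l₂ hm _ ih₁ ih₂ hf => ?_
  have hfm : ∀ y ∈ l₁.map f ++ l₂.map f, f m < y := by
    simp only [List.mem_append, List.mem_map]
    rintro _ (⟨x, hx, rfl⟩ | ⟨x, hx, rfl⟩) <;>
      exact hf (by simp) (by simp [hx]) (hm x (by simp [hx]))
  rw [List.map_append, List.map_cons, phi_append_cons hfm, phi_append_cons hm,
    ih₁ (hf.mono fun x hx => by simp_all), ih₂ (hf.mono fun x hx => by simp_all)]

lemma List.perm_iff_nodup_toFinset_eq {α : Type*} [DecidableEq α] {l l' : List α}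
    (hl' : l'.Nodup) : l.Perm l' ↔ l.Nodup ∧ l.toFinset = l'.toFinset :=
  ⟨fun h => ⟨h.nodup_iff.mpr hl', List.toFinset_eq_of_perm _ _ h⟩,
    fun h => List.perm_of_nodup_nodup_toFinset_eq h.1 hl' h.2⟩

lemma isPermList_iff {n : ℕ} {l : List ℤ} :
    IsPermList n l ↔ l.Nodup ∧ l.toFinset = Finset.Icc 1 (n : ℤ) := by
  -- In `IsPermList`, `List.range n` is coerced to `List ℤ` through the list monad.
  unfold IsPermList
  simp only [List.pure_def, List.bind_eq_flatMap]
  rw [show (fun a : ℕ => [(a : ℤ)]) = pure ∘ Nat.cast from rfl, List.flatMap_pure_eq_map,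
    List.map_map, List.perm_iff_nodup_toFinset_eq
      (List.nodup_range.map fun _ _ h => by simpa using h)]
  congr! 2
  ext x
  simp only [List.mem_toFinset, List.mem_map, List.mem_range, Finset.mem_Icc, Function.comp]
  exact ⟨by rintro ⟨k, hk, rfl⟩; omega, fun h => ⟨(x - 1).toNat, by omega, by omega⟩⟩

noncomputable def STreeOn (A : Finset ℤ) (T : Tree Unit) : Finset (List ℤ) :=
  A.toList.permutations.toFinset.filter (phi · = T)

lemma mem_STreeOn {A : Finset ℤ} {T : Tree Unit} {l : List ℤ} :
    l ∈ STreeOn A T ↔ l.Nodup ∧ l.toFinset = A ∧ phi l = T := by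
  simp [STreeOn, List.perm_iff_nodup_toFinset_eq A.nodup_toList, and_assoc]

lemma coe_STreeOn_Icc (T : Tree Unit) :
    (STreeOn (Finset.Icc 1 T.numNodes) T : Set (List ℤ)) = STree T := by
  ext l
  simp [mem_STreeOn, STree, isPermList_iff, and_assoc]

lemma length_eq_numNodes_of_mem_STreeOn {A : Finset ℤ} {T : Tree Unit} {l : List ℤ}
    (hl : l ∈ STreeOn A T) : l.length = T.numNodes := by
  obtain ⟨hnd, -, rfl⟩ := mem_STreeOn.mp hl
  rw [numNodes_phi hnd]

lemma card_eq_numNodes_of_mem_STreeOn {A : Finset ℤ} {T : Tree Unit} {l : List ℤ}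
    (hl : l ∈ STreeOn A T) : A.card = T.numNodes := by
  obtain ⟨hnd, rfl, -⟩ := mem_STreeOn.mp hl
  rw [List.toFinset_card_of_nodup hnd, length_eq_numNodes_of_mem_STreeOn hl]

lemma Finset.exists_strictMonoOn_image_eq {α : Type*} [LinearOrder α] {A B : Finset α}
    (h : A.card = B.card) : ∃ f : α → α, StrictMonoOn f A ∧ A.image f = B := by
  let e : A ≃o B := (A.orderIsoOfFin h).symm.trans (B.orderIsoOfFin rfl)
  let f := Function.extend Subtype.val (fun x : A => (e x : α)) id
  have hf : ∀ x (hx : x ∈ A), f x = e ⟨x, hx⟩ :=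
    fun x hx => Subtype.val_injective.extend_apply _ _ ⟨x, hx⟩
  refine ⟨f, fun x hx y hy hxy => ?_, ?_⟩
  · rw [hf x hx, hf y hy]
    exact e.strictMono hxy
  · ext y
    simp only [Finset.mem_image]
    refine ⟨fun ⟨x, hx, hxy⟩ => hxy ▸ hf x hx ▸ (e ⟨x, hx⟩).2,
      fun hy => ⟨e.symm ⟨y, hy⟩, (e.symm ⟨y, hy⟩).2, ?_⟩⟩
    rw [hf _ (e.symm ⟨y, hy⟩).2]
    simp

lemma map_mem_STreeOn_image {f : ℤ → ℤ} {A : Finset ℤ} {T : Tree Unit} {l : List ℤ}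
    (hf : StrictMonoOn f A) (hl : l ∈ STreeOn A T) : l.map f ∈ STreeOn (A.image f) T := by
  obtain ⟨hnd, rfl, rfl⟩ := mem_STreeOn.mp hl
  have hf' : StrictMonoOn f {x | x ∈ l} := hf.mono fun x hx => by simpa using hx
  refine mem_STreeOn.mpr
    ⟨hnd.map_on fun x hx y hy => hf'.injOn hx hy, ?_, phi_map_of_strictMonoOn hnd hf'⟩
  ext
  simp

lemma card_STreeOn_le_of_card_eq {A B : Finset ℤ} (h : A.card = B.card) (T : Tree Unit) :
    (STreeOn A T).card ≤ (STreeOn B T).card := by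
  obtain ⟨f, hf, rfl⟩ := Finset.exists_strictMonoOn_image_eq h
  refine Finset.card_le_card_of_injOn (List.map f) (fun l hl => map_mem_STreeOn_image hf hl) ?_
  have hinv : ∀ l ∈ STreeOn A T, (l.map f).map (Function.invFunOn f A) = l := by
    intro l hl
    rw [List.map_map]
    refine (List.map_congr_left fun x hx => hf.injOn.leftInvOn_invFunOn ?_).trans l.map_id
    rw [← (mem_STreeOn.mp hl).2.1]
    simpa using hx
  intro l₁ hl₁ l₂ hl₂ heq
  rw [← hinv l₁ hl₁, ← hinv l₂ hl₂, heq]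

lemma card_STreeOn_eq_ncard_STree {A : Finset ℤ} {T : Tree Unit} (h : A.card = T.numNodes) :
    (STreeOn A T).card = (STree T).ncard := by
  have hIcc : (Finset.Icc 1 (T.numNodes : ℤ)).card = T.numNodes := by simp
  rw [← coe_STreeOn_Icc, Set.ncard_coe_finset]
  exact le_antisymm (card_STreeOn_le_of_card_eq (h.trans hIcc.symm) T)
    (card_STreeOn_le_of_card_eq (hIcc.trans h.symm) T)

lemma append_cons_mem_STreeOn_insert_node {m : ℤ} {A A₁ : Finset ℤ} (hm : ∀ x ∈ A, m < x)
    (hA₁ : A₁ ⊆ A) {T₁ T₂ : Tree Unit} {l₁ l₂ : List ℤ} (hl₁ : l₁ ∈ STreeOn A₁ T₁)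
    (hl₂ : l₂ ∈ STreeOn (A \ A₁) T₂) :
    l₁ ++ m :: l₂ ∈ STreeOn (insert m A) (Tree.node () T₁ T₂) := by
  obtain ⟨hnd₁, rfl, rfl⟩ := mem_STreeOn.mp hl₁
  obtain ⟨hnd₂, hA₂, rfl⟩ := mem_STreeOn.mp hl₂
  have hmA : ∀ x ∈ l₁ ++ l₂, x ∈ A := by
    intro x hx
    rcases List.mem_append.mp hx with hx | hx
    · exact hA₁ (List.mem_toFinset.mpr hx)
    · exact (Finset.mem_sdiff.mp (hA₂ ▸ List.mem_toFinset.mpr hx)).1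
  refine mem_STreeOn.mpr ⟨?_, ?_, phi_append_cons fun x hx => hm x (hmA x hx)⟩
  · rw [List.nodup_middle, List.nodup_cons, List.nodup_append]
    refine ⟨fun h => (hm m (hmA m h)).false, hnd₁, hnd₂, fun x hx y hy hxy => ?_⟩
    exact (Finset.mem_sdiff.mp (hA₂ ▸ List.mem_toFinset.mpr hy)).2 (hxy ▸ List.mem_toFinset.mpr hx)
  · rw [List.toFinset_append, List.toFinset_cons, hA₂, Finset.union_insert,
      Finset.union_sdiff_of_subset hA₁]

lemma exists_append_cons_of_mem_STreeOn_insert_node {m : ℤ} {A : Finset ℤ}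
    (hm : ∀ x ∈ A, m < x) {T₁ T₂ : Tree Unit} {l : List ℤ}
    (hl : l ∈ STreeOn (insert m A) (Tree.node () T₁ T₂)) :
    ∃ A₁ ⊆ A, ∃ l₁ ∈ STreeOn A₁ T₁, ∃ l₂ ∈ STreeOn (A \ A₁) T₂, l = l₁ ++ m :: l₂ := by
  obtain ⟨hnd, hA, hphi⟩ := mem_STreeOn.mp hl
  obtain ⟨l₁, l₂, rfl⟩ :=
    List.append_of_mem (List.mem_toFinset.mp (hA ▸ Finset.mem_insert_self m A))
  have hmem : ∀ x, x ∈ A ↔ x ≠ m ∧ (x ∈ l₁ ∨ x ∈ l₂) := fun x => by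
    have := Finset.ext_iff.mp hA x
    simp only [List.mem_toFinset, List.mem_append, List.mem_cons, Finset.mem_insert] at this
    have := fun hx : x ∈ A => (hm x hx).ne'
    tauto
  rw [List.nodup_middle, List.nodup_cons, List.nodup_append] at hnd
  obtain ⟨hm₁₂, hnd₁, hnd₂, hdisj⟩ := hnd
  have hlt : ∀ x ∈ l₁ ++ l₂, m < x := fun x hx =>
    hm x ((hmem x).mpr ⟨by rintro rfl; exact hm₁₂ hx, List.mem_append.mp hx⟩)
  rw [phi_append_cons hlt, BinaryTree.node.injEq] at hphi
  refine ⟨l₁.toFinset, fun x hx => ?_, l₁, mem_STreeOn.mpr ⟨hnd₁, rfl, hphi.2.1⟩, l₂,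
    mem_STreeOn.mpr ⟨hnd₂, ?_, hphi.2.2⟩, rfl⟩
  · have hx := List.mem_toFinset.mp hx
    exact (hmem x).mpr ⟨by rintro rfl; exact hm₁₂ (List.mem_append_left _ hx), Or.inl hx⟩
  · ext x
    simp only [Finset.mem_sdiff, List.mem_toFinset, hmem]
    refine ⟨fun hx => ⟨⟨?_, Or.inr hx⟩, fun hx₁ => hdisj x hx₁ x hx rfl⟩, by tauto⟩
    rintro rfl
    exact hm₁₂ (List.mem_append_right _ hx)

lemma card_STreeOn_insert_node {m : ℤ} {A : Finset ℤ} (hm : ∀ x ∈ A, m < x) (T₁ T₂ : Tree Unit) :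
    (STreeOn (insert m A) (Tree.node () T₁ T₂)).card =
      ∑ A₁ ∈ A.powersetCard T₁.numNodes, (STreeOn A₁ T₁).card * (STreeOn (A \ A₁) T₂).card := by
  simp_rw [← Finset.card_product]
  rw [← Finset.card_sigma]
  refine (Finset.card_bij (fun p _ => p.2.1 ++ m :: p.2.2) ?_ ?_ ?_).symm
  · rintro ⟨A₁, l₁, l₂⟩ hp
    simp only [Finset.mem_sigma, Finset.mem_product, Finset.mem_powersetCard] at hp
    exact append_cons_mem_STreeOn_insert_node hm hp.1.1 hp.2.1 hp.2.2
  · rintro ⟨A₁, l₁, l₂⟩ hp ⟨A₁', l₁', l₂'⟩ hp' heq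
    simp only [Finset.mem_sigma, Finset.mem_product] at hp hp'
    obtain ⟨rfl, h₂⟩ := List.append_inj heq ((length_eq_numNodes_of_mem_STreeOn hp.2.1).trans
      (length_eq_numNodes_of_mem_STreeOn hp'.2.1).symm)
    obtain rfl := List.cons_injective h₂
    obtain rfl : A₁ = A₁' := (mem_STreeOn.mp hp.2.1).2.1.symm.trans (mem_STreeOn.mp hp'.2.1).2.1
    rfl
  · intro l hl
    obtain ⟨A₁, hA₁, l₁, hl₁, l₂, hl₂, rfl⟩ := exists_append_cons_of_mem_STreeOn_insert_node hm hl
    refine ⟨⟨A₁, l₁, l₂⟩, ?_, rfl⟩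
    simp only [Finset.mem_sigma, Finset.mem_product, Finset.mem_powersetCard]
    exact ⟨⟨hA₁, card_eq_numNodes_of_mem_STreeOn hl₁⟩, hl₁, hl₂⟩

/-- `|S_{T₁ ∨ T₂}| = C(|T| - 1, |T₁|) · |S_{T₁}| · |S_{T₂}|`. -/
theorem ncard_STree_node (T₁ T₂ : Tree Unit) :
    (STree (Tree.node () T₁ T₂)).ncard =
      Nat.choose ((Tree.node () T₁ T₂).numNodes - 1) T₁.numNodes *
        (STree T₁).ncard * (STree T₂).ncard := by
  set n := (Tree.node () T₁ T₂).numNodes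
  have hn : n = T₁.numNodes + T₂.numNodes + 1 := rfl
  set A := Finset.Ioc (1 : ℤ) n
  have hA : A.card = n - 1 := by simp [A, Finset.card_Ioc_eq_card_Icc_sub_one]
  have hcard : ∀ A₁ ∈ A.powersetCard T₁.numNodes,
      (STreeOn A₁ T₁).card * (STreeOn (A \ A₁) T₂).card = (STree T₁).ncard * (STree T₂).ncard := by
    intro A₁ hA₁
    obtain ⟨hsub, hcard₁⟩ := Finset.mem_powersetCard.mp hA₁
    rw [card_STreeOn_eq_ncard_STree hcard₁, card_STreeOn_eq_ncard_STree
      (by rw [Finset.card_sdiff_of_subset hsub, hA, hcard₁]; omega)]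
  rw [← coe_STreeOn_Icc, Set.ncard_coe_finset, ← Finset.Ioc_insert_left (by omega),
    card_STreeOn_insert_node fun x hx => (Finset.mem_Ioc.mp hx).1, Finset.sum_congr rfl hcard,
    Finset.sum_const, Finset.card_powersetCard, hA, smul_eq_mul, mul_assoc]
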